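/- Let (X,d) be a metric space in which every point is an accumulation point, and let T : X → X be a continuous generalized Kannan type mapping with constant λ ∈ [0, 2/3). Then T is a Kannan type mapping with constant 3λ/4 ∈ [0, 1/2). -/

import Mathlib

/-! Fix `x ≠ y` and let a third point `z` tend to `x` through points distinct from `x` and `y`,
which is possible because `x` is not isolated. By continuity of `T` the generalized Kannan
inequality for `(x, z, y)` becomes `2 d(Tx, Ty) ≤ λ (2 d(x, Tx) + d(y, Ty))`; adding this to the
same inequality with `x` and `y` exchanged gives `4 d(Tx, Ty) ≤ 3λ (d(x, Tx) + d(y, Ty))`. -/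

open Filter Topology

theorem le_of_eventually_nhdsNE_le {X α : Type*} [TopologicalSpace X] [TopologicalSpace α]
    [Preorder α] [OrderClosedTopology α] {f g : X → α} {x : X} [(𝓝[≠] x).NeBot]
    (hf : ContinuousAt f x) (hg : ContinuousAt g x) (h : ∀ᶠ z in 𝓝[≠] x, f z ≤ g z) :
    f x ≤ g x :=
  le_of_tendsto_of_tendsto (hf.tendsto.mono_left nhdsWithin_le_nhds)
    (hg.tendsto.mono_left nhdsWithin_le_nhds) h

section GeneralizedKannan

variable {X : Type*} [MetricSpace X]

def IsGeneralizedKannan (T : X → X) (l : ℝ) : Prop :=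
  ∀ x y z : X, x ≠ y → y ≠ z → x ≠ z →
    dist (T x) (T y) + dist (T y) (T z) + dist (T x) (T z) ≤
      l * (dist x (T x) + dist y (T y) + dist z (T z))

theorem IsGeneralizedKannan.two_mul_dist_le {T : X → X} {l : ℝ} (hT : IsGeneralizedKannan T l)
    {x y : X} [(𝓝[≠] x).NeBot] (hTx : ContinuousAt T x) (hxy : x ≠ y) :
    2 * dist (T x) (T y) ≤ l * (2 * dist x (T x) + dist y (T y)) := by
  have hev : ∀ᶠ z in 𝓝[≠] x,
      dist (T x) (T z) + dist (T z) (T y) + dist (T x) (T y) ≤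
        l * (dist x (T x) + dist z (T z) + dist y (T y)) := by
    filter_upwards [self_mem_nhdsWithin,
      eventually_nhdsWithin_of_eventually_nhds (eventually_ne_nhds hxy)] with z hzx hzy
    exact hT x z y (Ne.symm hzx) hzy hxy
  have hlim := le_of_eventually_nhdsNE_le (by fun_prop) (by fun_prop) hev
  simp only [dist_self] at hlim
  linarith

theorem IsGeneralizedKannan.dist_le {T : X → X} {l : ℝ} (hT : IsGeneralizedKannan T l)
    (hl : 0 ≤ l) (hacc : ∀ x : X, (𝓝[≠] x).NeBot) (hcont : Continuous T) (x y : X) :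
    dist (T x) (T y) ≤ (3 * l / 4) * (dist x (T x) + dist y (T y)) := by
  rcases eq_or_ne x y with rfl | hxy
  · rw [dist_self]
    positivity
  have hxy' := hT.two_mul_dist_le hcont.continuousAt hxy
  have hyx := hT.two_mul_dist_le hcont.continuousAt hxy.symm
  rw [dist_comm (T y)] at hyx
  linarith

end GeneralizedKannan

theorem stmt_2 {X : Type*} [MetricSpace X] (T : X → X)
    (hacc : ∀ x : X, (nhdsWithin x {x}ᶜ).NeBot) (hcont : Continuous T)
    (l : ℝ) (hl0 : 0 ≤ l) (hl : l < 2/3)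
    (hGK : ∀ x y z : X, x ≠ y → y ≠ z → x ≠ z →
      dist (T x) (T y) + dist (T y) (T z) + dist (T x) (T z) ≤
        l * (dist x (T x) + dist y (T y) + dist z (T z))) :
    0 ≤ 3*l/4 ∧ 3*l/4 < 1/2 ∧
    ∀ x y : X, dist (T x) (T y) ≤ (3*l/4) * (dist x (T x) + dist y (T y)) :=
  ⟨by positivity, by linarith, IsGeneralizedKannan.dist_le hGK hl0 hacc hcont⟩
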